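/- Let L_{i,j} := ((1+2u−u²)/(1−u(1+v+uv)))|_{u^i v^j}, M_{i,j} := f_DT(u,v)|_{u^i v^j}, and P_{i,j} := g_20V(u,v)|_{u^i v^j} for i, j ≥ 0. Then: (1) L_{i,j} = 0 whenever j > i and L_{i,i} = 1 for all i (L is lower triangular with unit diagonal); and (2) for all i, j ≥ 0, Σ_{ℓ=0}^{i} L_{i,ℓ}·M_{ℓ,j} = P_{i,j}. -/

import Mathlib

noncomputable section

/-- Formal power series in two variables `u, v` over `ℚ`. -/
abbrev PS : Type := MvPowerSeries (Fin 2) ℚ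

def uu : PS := MvPowerSeries.X 0
def vv : PS := MvPowerSeries.X 1

/-- Coefficient of `u^i v^j`. -/
def cf (i j : ℕ) (f : PS) : ℚ :=
  MvPowerSeries.coeff (Finsupp.single 0 i + Finsupp.single 1 j) f

/-- `f_DT(u,v) = (1+u)/(1 - v - 4uv - u²v + u²v²)` as a power series. -/
def fDT : PS := (1 + uu) * (1 - vv - 4 * uu * vv - uu ^ 2 * vv + uu ^ 2 * vv ^ 2)⁻¹

/-- `g_20V(u,v) = (1+u²)(1+2u-u²)/((1-u²v)((1-u)² - v(1+u)²))` as a power series. -/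
def g20V : PS :=
  (1 + uu ^ 2) * (1 + 2 * uu - uu ^ 2) *
    ((1 - uu ^ 2 * vv) * ((1 - uu) ^ 2 - vv * (1 + uu) ^ 2))⁻¹

/-- The generating series of the lower-triangular matrix `L`. -/
def fL : PS := (1 + 2 * uu - uu ^ 2) * (1 - uu * (1 + vv + uu * vv))⁻¹

/-! Expanding `fL` in powers of `v` shows that the `l`-th column of `L` has generating function
`dL · hL ^ l`, where `dL = (1 + 2u - u²)/(1 - u)` and `hL = u(1 + u)/(1 - u)`: `L` is the Riordan
array `(dL, hL)`. Since `hL = u + O(u²)` and `dL(0) = 1`, it is lower unitriangular, and it sends a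
column with generating function `m(u)` to `dL(u) · m(hL(u))`. Hence `L · M = P` amounts to the
rational-function identity `g20V(u, v) = dL(u) · fDT(hL(u), v)`. -/

def finTwoEquivOptionUnit : Fin 2 ≃ Option Unit where
  toFun i := if i = 0 then some () else none
  invFun o := o.elim 1 fun _ => 0
  left_inv i := by fin_cases i <;> rfl
  right_inv o := by rcases o with _ | _ <;> rfl

namespace MvPowerSeries

variable (R : Type*) [CommSemiring R]

/-- The outer variable is `X 1`; the coefficients are power series in `X 0`. -/
def expandSnd : MvPowerSeries (Fin 2) R ≃ₐ[R] PowerSeries (PowerSeries R) :=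
  (renameEquiv R finTwoEquivOptionUnit).trans (optionEquivLeft Unit R)

variable {R}

theorem coeff_coeff_expandSnd (F : MvPowerSeries (Fin 2) R) (i j : ℕ) :
    PowerSeries.coeff i (PowerSeries.coeff j (expandSnd R F)) =
      coeff (Finsupp.single 0 i + Finsupp.single 1 j) F := by
  have h : (Finsupp.single () i).optionElim j = Finsupp.embDomain
      finTwoEquivOptionUnit.toEmbedding (Finsupp.single 0 i + Finsupp.single 1 j) := by
    ext o
    rcases o with _ | _ <;> simp [finTwoEquivOptionUnit]
  rw [expandSnd, AlgEquiv.trans_apply, PowerSeries.coeff, coeff_coeff_optionEquivLeft, h]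
  exact coeff_embDomain_rename _ _ _

@[simp] theorem expandSnd_X_zero : expandSnd R (X 0) = PowerSeries.C PowerSeries.X := by
  simp [expandSnd, finTwoEquivOptionUnit, PowerSeries.X_apply]

@[simp] theorem expandSnd_X_one : expandSnd R (X 1) = PowerSeries.X := by
  simp [expandSnd, finTwoEquivOptionUnit]

theorem map_mul_inv_eq_of_mul_eq {σ k S : Type*} [Field k] [CommRing S]
    (φ : MvPowerSeries σ k →+* S) {N D : MvPowerSeries σ k} (hD : constantCoeff D ≠ 0) {G : S}
    (hG : G * φ D = φ N) : φ (N * D⁻¹) = G := by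
  have hinv : φ D * φ D⁻¹ = 1 := by rw [← map_mul, MvPowerSeries.mul_inv_cancel _ hD, map_one]
  rw [map_mul, ← hG, mul_assoc, hinv, mul_one]

end MvPowerSeries

open PowerSeries
open MvPowerSeries (expandSnd)

namespace PowerSeries

section CommRing

variable {R : Type*} [CommRing R]

theorem coeff_pow_eq_zero_of_lt {h : R⟦X⟧} (hh : constantCoeff h = 0) {k l : ℕ} (hkl : k < l) :
    coeff k (h ^ l) = 0 :=
  X_pow_dvd_iff.mp (pow_dvd_pow_of_dvd (X_dvd_iff.mpr hh) l) k hkl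

theorem coeff_subst_eq_coeff_sum {h : R⟦X⟧} (hh : constantCoeff h = 0) (f : R⟦X⟧) {k n : ℕ}
    (hk : k ≤ n) :
    coeff k (f.subst h : R⟦X⟧) = coeff k (∑ l ∈ Finset.range (n + 1), coeff l f • h ^ l) := by
  rw [coeff_subst' (HasSubst.of_constantCoeff_zero' hh), map_sum,
    finsum_eq_sum_of_support_subset (s := Finset.range (n + 1))]
  · simp only [LinearMap.map_smul_of_tower]
  · intro l hl
    by_contra hln
    simp only [Finset.coe_range, Set.mem_Iio, not_lt] at hln
    exact hl (by simp only [coeff_pow_eq_zero_of_lt hh (show k < l by omega), smul_zero])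

/-- The fundamental theorem of Riordan arrays. -/
theorem coeff_mul_subst {h : R⟦X⟧} (hh : constantCoeff h = 0) (d f : R⟦X⟧) (n : ℕ) :
    coeff n (d * f.subst h) = ∑ l ∈ Finset.range (n + 1), coeff n (d * h ^ l) * coeff l f := by
  have htrunc : coeff n (d * f.subst h) =
      coeff n (d * ∑ l ∈ Finset.range (n + 1), coeff l f • h ^ l) := by
    simp only [coeff_mul]
    refine Finset.sum_congr rfl fun p hp => ?_
    rw [coeff_subst_eq_coeff_sum hh f (Finset.HasAntidiagonal.antidiagonal.snd_le hp)]
  rw [htrunc, Finset.mul_sum, map_sum]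
  refine Finset.sum_congr rfl fun l _ => ?_
  rw [mul_smul_comm, LinearMap.map_smul_of_tower, smul_eq_mul, mul_comm]

theorem rescale_mk_one_mul_one_sub_C_mul_X (a : R) : rescale a (mk 1) * (1 - C a * X) = 1 := by
  simpa [rescale_X] using congrArg (rescale a) (mk_one_mul_one_sub_eq_one (S := R))

end CommRing

theorem inv_one_sub_X_mul_one_sub_X {k : Type*} [Field k] : ((1 : k⟦X⟧) - X)⁻¹ * (1 - X) = 1 :=
  PowerSeries.inv_mul_cancel _ (by simp)

end PowerSeries

def dL : ℚ⟦X⟧ := (1 + 2 * X - X ^ 2) * (1 - X)⁻¹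

def hL : ℚ⟦X⟧ := X * ((1 + X) * (1 - X)⁻¹)

theorem dL_mul_one_sub_X : dL * (1 - X) = 1 + 2 * X - X ^ 2 := by
  rw [dL, mul_assoc, inv_one_sub_X_mul_one_sub_X, mul_one]

theorem hL_mul_one_sub_X : hL * (1 - X) = X * (1 + X) := by
  rw [hL, mul_assoc, mul_assoc, inv_one_sub_X_mul_one_sub_X, mul_one]

theorem constantCoeff_hL : constantCoeff hL = 0 := by
  simp [hL]

theorem dL_mul_hL_pow (l : ℕ) : dL * hL ^ l = X ^ l * (dL * ((1 + X) * (1 - X)⁻¹) ^ l) := by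
  rw [hL, mul_pow, mul_left_comm]

theorem coeff_dL_mul_hL_pow_of_lt {i l : ℕ} (h : i < l) : coeff i (dL * hL ^ l) = 0 := by
  rw [dL_mul_hL_pow, coeff_X_pow_mul', if_neg (by omega)]

theorem coeff_dL_mul_hL_pow_self (l : ℕ) : coeff l (dL * hL ^ l) = 1 := by
  rw [dL_mul_hL_pow, coeff_X_pow_mul', if_pos le_rfl, Nat.sub_self,
    coeff_zero_eq_constantCoeff_apply]
  simp [dL, constantCoeff_inv]

@[simp] theorem expandSnd_uu : expandSnd ℚ uu = C X := MvPowerSeries.expandSnd_X_zero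

@[simp] theorem expandSnd_vv : expandSnd ℚ vv = X := MvPowerSeries.expandSnd_X_one

theorem cf_eq_coeff_coeff_expandSnd (i j : ℕ) (F : PS) :
    cf i j F = coeff i (coeff j (expandSnd ℚ F)) :=
  (MvPowerSeries.coeff_coeff_expandSnd F i j).symm

theorem expandSnd_fL : expandSnd ℚ fL = C dL * rescale hL (mk 1) := by
  rw [fL]
  refine MvPowerSeries.map_mul_inv_eq_of_mul_eq (expandSnd ℚ : PS →+* ℚ⟦X⟧⟦X⟧)
    (by simp [uu, vv]) ?_
  have hd := congrArg C dL_mul_one_sub_X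
  have hh := congrArg C hL_mul_one_sub_X
  simp only [RingHom.coe_coe, expandSnd_uu, expandSnd_vv, map_mul, map_sub, map_add, map_one,
    map_pow, map_ofNat] at hd hh ⊢
  -- `1 - u (1 + v + u v) = (1 - u) (1 - hL v)`
  linear_combination (C dL * (1 - C X)) * rescale_mk_one_mul_one_sub_C_mul_X hL + hd
    + (C dL * rescale hL (mk 1) * X) * hh

theorem cf_fL (i l : ℕ) : cf i l fL = coeff i (dL * hL ^ l) := by
  simp [cf_eq_coeff_coeff_expandSnd, expandSnd_fL, coeff_rescale]

def substHL : ℚ⟦X⟧ →+* ℚ⟦X⟧ :=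
  (substAlgHom (R := ℚ) (HasSubst.of_constantCoeff_zero' constantCoeff_hL)).toRingHom

theorem substHL_apply (f : ℚ⟦X⟧) : substHL f = f.subst hL :=
  congrFun (coe_substAlgHom _) f

theorem substHL_X : substHL X = hL := by
  rw [substHL_apply, subst_X (HasSubst.of_constantCoeff_zero' constantCoeff_hL)]

theorem fDT_mul : fDT * (1 - vv - 4 * uu * vv - uu ^ 2 * vv + uu ^ 2 * vv ^ 2) = 1 + uu := by
  rw [fDT, mul_assoc, MvPowerSeries.inv_mul_cancel _ (by simp [uu, vv]), mul_one]

theorem expandSnd_g20V : expandSnd ℚ g20V = C dL * map substHL (expandSnd ℚ fDT) := by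
  have hF := congrArg (fun F => map substHL (expandSnd ℚ F)) fDT_mul
  have hd := congrArg C dL_mul_one_sub_X
  have hh := congrArg C hL_mul_one_sub_X
  simp only [map_mul, map_sub, map_add, map_one, map_pow, map_ofNat, expandSnd_uu, expandSnd_vv,
    map_C, map_X, substHL_X] at hF hd hh
  rw [g20V]
  refine MvPowerSeries.map_mul_inv_eq_of_mul_eq (expandSnd ℚ : PS →+* ℚ⟦X⟧⟦X⟧)
    (by simp [uu, vv]) ?_
  simp only [RingHom.coe_coe, expandSnd_uu, expandSnd_vv, map_mul, map_sub, map_add, map_one,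
    map_pow, map_ofNat]
  set x : ℚ⟦X⟧⟦X⟧ := C X
  set h : ℚ⟦X⟧⟦X⟧ := C hL
  set d : ℚ⟦X⟧⟦X⟧ := C dL
  set y : ℚ⟦X⟧⟦X⟧ := X
  -- Since `h (1 - x) = x (1 + x)`, `(1 - x)² (1 - y - 4 h y - h² y + h² y²)` is the denominator
  -- `(1 - x² y) ((1 - x)² - y (1 + x)²)` of `g20V`, and `d (1 - x)² (1 + h) = (1 + x²) (1 + 2x - x²)`.
  linear_combination (d * (1 - x) ^ 2) * hF + ((1 - x) * (1 + h)) * hd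
    + ((1 + 2 * x - x ^ 2) - d * map substHL (expandSnd ℚ fDT) *
        (-4 * y * (1 - x) + (y ^ 2 - y) * (h * (1 - x) + x * (1 + x)))) * hh

theorem L_lowerTriangular_and_LM_eq_P :
    (∀ i j : ℕ, i < j → cf i j fL = 0) ∧
    (∀ i : ℕ, cf i i fL = 1) ∧
    (∀ i j : ℕ, ∑ l ∈ Finset.range (i + 1), cf i l fL * cf l j fDT = cf i j g20V) := by
  refine ⟨fun i j hij => ?_, fun i => ?_, fun i j => ?_⟩
  · rw [cf_fL, coeff_dL_mul_hL_pow_of_lt hij]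
  · rw [cf_fL, coeff_dL_mul_hL_pow_self]
  · rw [cf_eq_coeff_coeff_expandSnd i j g20V, expandSnd_g20V, coeff_C_mul, coeff_map,
      substHL_apply, coeff_mul_subst constantCoeff_hL]
    refine Finset.sum_congr rfl fun l _ => ?_
    rw [cf_fL, cf_eq_coeff_coeff_expandSnd l j fDT]
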